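/- In the double category Psa₂(T) of pseudo algebras, the vertical composite of two coherent double cells is coherent: with lax morphisms f, g, h, colax morphisms r, s, r', s', and coherent cells π : sf ⟶ gr and ζ : s'g ⟶ hr', the pasted cell (s' ◁ π) ≫ (ζ ▷ r) : s' s f ⟶ h r' r satisfies the coherence condition (coh) with respect to f, h and the composite colax morphisms r'r, s's. -/
import Mathlib


open CategoryTheory Bicategory

universe w v u

variable {C : Type u} [Bicategory.{w, v} C] [Bicategory.Strict C]

/-- A (strict) 2-monad `(T, h, m)` on a strict 2-category `C`. -/
structure TwoMonad (C : Type u) [Bicategory.{w, v} C] [Bicategory.Strict C] where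
  obj : C → C
  map : ∀ {a b : C}, (a ⟶ b) → (obj a ⟶ obj b)
  map₂ : ∀ {a b : C} {f g : a ⟶ b}, (f ⟶ g) → (map f ⟶ map g)
  map_id : ∀ a : C, map (𝟙 a) = 𝟙 (obj a)
  map_comp : ∀ {a b c : C} (f : a ⟶ b) (g : b ⟶ c), map (f ≫ g) = map f ≫ map g
  map₂_id : ∀ {a b : C} (f : a ⟶ b), map₂ (𝟙 f) = 𝟙 (map f)
  map₂_comp : ∀ {a b : C} {f g h : a ⟶ b} (η : f ⟶ g) (θ : g ⟶ h),
    map₂ (η ≫ θ) = map₂ η ≫ map₂ θ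
  map₂_whiskerLeft : ∀ {a b c : C} (f : a ⟶ b) {g h : b ⟶ c} (η : g ⟶ h),
    map₂ (f ◁ η) = eqToHom (map_comp f g) ≫ (map f ◁ map₂ η) ≫ eqToHom (map_comp f h).symm
  map₂_whiskerRight : ∀ {a b c : C} {f g : a ⟶ b} (η : f ⟶ g) (h : b ⟶ c),
    map₂ (η ▷ h) = eqToHom (map_comp f h) ≫ (map₂ η ▷ map h) ≫ eqToHom (map_comp g h).symm
  unit : ∀ a : C, a ⟶ obj a
  mult : ∀ a : C, obj (obj a) ⟶ obj a
  unit_nat : ∀ {a b : C} (f : a ⟶ b), unit a ≫ map f = f ≫ unit b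
  mult_nat : ∀ {a b : C} (f : a ⟶ b), mult a ≫ map f = map (map f) ≫ mult b
  unit_nat₂ : ∀ {a b : C} {f g : a ⟶ b} (η : f ⟶ g),
    unit a ◁ map₂ η = eqToHom (unit_nat f) ≫ (η ▷ unit b) ≫ eqToHom (unit_nat g).symm
  mult_nat₂ : ∀ {a b : C} {f g : a ⟶ b} (η : f ⟶ g),
    mult a ◁ map₂ η =
      eqToHom (mult_nat f) ≫ (map₂ (map₂ η) ▷ mult b) ≫ eqToHom (mult_nat g).symm
  unit_mult : ∀ a : C, unit (obj a) ≫ mult a = 𝟙 (obj a)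
  map_unit_mult : ∀ a : C, map (unit a) ≫ mult a = 𝟙 (obj a)
  mult_assoc : ∀ a : C, map (mult a) ≫ mult a = mult (obj a) ≫ mult a

/-- A pseudo algebra `(A, a, ω, κ)` for a 2-monad `T`: a structure 1-cell
`a : TA ⟶ A`, an invertible normaliser `ω : 1_A ≅ a ∘ hA` and an invertible extended
associator `κ : a ∘ Ta ≅ a ∘ mA`, subject to the coherence conditions
`(a ◁ Tω) ≫ (κ ▷ ThA) = 1_a = (ω ▷ a) ≫ (κ ▷ hTA)` and
`(κ ▷ T²a) ≫ (κ ▷ mTA) = (a ◁ Tκ) ≫ (κ ▷ TmA)`. -/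
structure PsAlg (T : TwoMonad C) where
  A : C
  a : T.obj A ⟶ A
  ω : 𝟙 A ≅ T.unit A ≫ a
  κ : T.map a ≫ a ≅ T.mult A ≫ a
  coh_unit₁ :
    eqToHom (show a = T.map (𝟙 A) ≫ a by rw [T.map_id, Category.id_comp]) ≫
      (T.map₂ ω.hom ▷ a) ≫
      eqToHom (show T.map (T.unit A ≫ a) ≫ a = T.map (T.unit A) ≫ T.map a ≫ a by
        rw [T.map_comp, Category.assoc]) ≫
      (T.map (T.unit A) ◁ κ.hom) ≫
      eqToHom (show T.map (T.unit A) ≫ T.mult A ≫ a = a by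
        rw [← Category.assoc, T.map_unit_mult, Category.id_comp]) = 𝟙 a
  coh_unit₂ :
    eqToHom (show a = a ≫ 𝟙 A by rw [Category.comp_id]) ≫
      (a ◁ ω.hom) ≫
      eqToHom (show a ≫ T.unit A ≫ a = T.unit (T.obj A) ≫ T.map a ≫ a by
        rw [← Category.assoc, ← T.unit_nat a, Category.assoc]) ≫
      (T.unit (T.obj A) ◁ κ.hom) ≫
      eqToHom (show T.unit (T.obj A) ≫ T.mult A ≫ a = a by
        rw [← Category.assoc, T.unit_mult, Category.id_comp]) = 𝟙 a
  coh_assoc :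
    (T.map (T.map a) ◁ κ.hom) ≫
      eqToHom (show T.map (T.map a) ≫ T.mult A ≫ a = T.mult (T.obj A) ≫ T.map a ≫ a by
        rw [← Category.assoc, ← T.mult_nat a, Category.assoc]) ≫
      (T.mult (T.obj A) ◁ κ.hom) =
    eqToHom (show T.map (T.map a) ≫ T.map a ≫ a = T.map (T.map a ≫ a) ≫ a by
        rw [T.map_comp, Category.assoc]) ≫
      (T.map₂ κ.hom ▷ a) ≫
      eqToHom (show T.map (T.mult A ≫ a) ≫ a = T.map (T.mult A) ≫ T.map a ≫ a by
        rw [T.map_comp, Category.assoc]) ≫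
      (T.map (T.mult A) ◁ κ.hom) ≫
      eqToHom (show T.map (T.mult A) ≫ T.mult A ≫ a = T.mult (T.obj A) ≫ T.mult A ≫ a by
        rw [← Category.assoc, T.mult_assoc, Category.assoc])

variable {T : TwoMonad C}

/-- `(f, φ)` is a lax morphism of pseudo algebras `(𝒜.a) → (ℬ.a)`:
`φ : b ∘ Tf ⟶ f ∘ a` satisfies the unit and associativity coherence conditions. -/
def IsLax (T : TwoMonad C) (𝒜 ℬ : PsAlg T) (f : 𝒜.A ⟶ ℬ.A)
    (φ : T.map f ≫ ℬ.a ⟶ 𝒜.a ≫ f) : Prop :=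
  (eqToHom (show f = f ≫ 𝟙 ℬ.A by simp) ≫ (f ◁ ℬ.ω.hom) ≫
      eqToHom (show f ≫ T.unit ℬ.A ≫ ℬ.a = T.unit 𝒜.A ≫ T.map f ≫ ℬ.a by
        rw [← Category.assoc, ← T.unit_nat f, Category.assoc]) ≫
      (T.unit 𝒜.A ◁ φ) =
    eqToHom (show f = 𝟙 𝒜.A ≫ f by simp) ≫ (𝒜.ω.hom ▷ f) ≫
      eqToHom (show (T.unit 𝒜.A ≫ 𝒜.a) ≫ f = T.unit 𝒜.A ≫ 𝒜.a ≫ f by simp)) ∧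
  ((T.map (T.map f) ◁ ℬ.κ.hom) ≫
      eqToHom (show T.map (T.map f) ≫ T.mult ℬ.A ≫ ℬ.a = T.mult 𝒜.A ≫ T.map f ≫ ℬ.a by
        rw [← Category.assoc, ← T.mult_nat f, Category.assoc]) ≫
      (T.mult 𝒜.A ◁ φ) =
    eqToHom (show T.map (T.map f) ≫ T.map ℬ.a ≫ ℬ.a = T.map (T.map f ≫ ℬ.a) ≫ ℬ.a by
        rw [T.map_comp, Category.assoc]) ≫
      (T.map₂ φ ▷ ℬ.a) ≫
      eqToHom (show T.map (𝒜.a ≫ f) ≫ ℬ.a = T.map 𝒜.a ≫ T.map f ≫ ℬ.a by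
        rw [T.map_comp, Category.assoc]) ≫
      (T.map 𝒜.a ◁ φ) ≫
      eqToHom (show T.map 𝒜.a ≫ 𝒜.a ≫ f = (T.map 𝒜.a ≫ 𝒜.a) ≫ f by simp) ≫
      (𝒜.κ.hom ▷ f) ≫
      eqToHom (show (T.mult 𝒜.A ≫ 𝒜.a) ≫ f = T.mult 𝒜.A ≫ 𝒜.a ≫ f by simp))

/-- `(r, ρ)` is a colax morphism of pseudo algebras:
`ρ : r ∘ a ⟶ b ∘ Tr` satisfies the unit and associativity coherence conditions. -/
def IsColax (T : TwoMonad C) (𝒜 ℬ : PsAlg T) (r : 𝒜.A ⟶ ℬ.A)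
    (ρ : 𝒜.a ≫ r ⟶ T.map r ≫ ℬ.a) : Prop :=
  (eqToHom (show r = 𝟙 𝒜.A ≫ r by simp) ≫ (𝒜.ω.hom ▷ r) ≫
      eqToHom (show (T.unit 𝒜.A ≫ 𝒜.a) ≫ r = T.unit 𝒜.A ≫ 𝒜.a ≫ r by simp) ≫
      (T.unit 𝒜.A ◁ ρ) ≫
      eqToHom (show T.unit 𝒜.A ≫ T.map r ≫ ℬ.a = r ≫ T.unit ℬ.A ≫ ℬ.a by
        rw [← Category.assoc, T.unit_nat r, Category.assoc]) =
    eqToHom (show r = r ≫ 𝟙 ℬ.A by simp) ≫ (r ◁ ℬ.ω.hom)) ∧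
  (eqToHom (show T.map 𝒜.a ≫ 𝒜.a ≫ r = (T.map 𝒜.a ≫ 𝒜.a) ≫ r by simp) ≫
      (𝒜.κ.hom ▷ r) ≫
      eqToHom (show (T.mult 𝒜.A ≫ 𝒜.a) ≫ r = T.mult 𝒜.A ≫ 𝒜.a ≫ r by simp) ≫
      (T.mult 𝒜.A ◁ ρ) =
    (T.map 𝒜.a ◁ ρ) ≫
      eqToHom (show T.map 𝒜.a ≫ T.map r ≫ ℬ.a = T.map (𝒜.a ≫ r) ≫ ℬ.a by
        rw [T.map_comp, Category.assoc]) ≫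
      (T.map₂ ρ ▷ ℬ.a) ≫
      eqToHom (show T.map (T.map r ≫ ℬ.a) ≫ ℬ.a = T.map (T.map r) ≫ T.map ℬ.a ≫ ℬ.a by
        rw [T.map_comp, Category.assoc]) ≫
      (T.map (T.map r) ◁ ℬ.κ.hom) ≫
      eqToHom (show T.map (T.map r) ≫ T.mult ℬ.A ≫ ℬ.a = T.mult 𝒜.A ≫ T.map r ≫ ℬ.a by
        rw [← Category.assoc, ← T.mult_nat r, Category.assoc]))

/-- The comparison 2-cell of the composite of two lax morphisms:
`c ∘ T(gf) ⟶ g ∘ b ∘ Tf ⟶ g ∘ f ∘ a`. -/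
def compLax {𝒜 ℬ 𝒞 : PsAlg T} (f : 𝒜.A ⟶ ℬ.A) (g : ℬ.A ⟶ 𝒞.A)
    (φ : T.map f ≫ ℬ.a ⟶ 𝒜.a ≫ f) (γ : T.map g ≫ 𝒞.a ⟶ ℬ.a ≫ g) :
    T.map (f ≫ g) ≫ 𝒞.a ⟶ 𝒜.a ≫ (f ≫ g) :=
  eqToHom (show T.map (f ≫ g) ≫ 𝒞.a = T.map f ≫ T.map g ≫ 𝒞.a by
      rw [T.map_comp, Category.assoc]) ≫
    (T.map f ◁ γ) ≫
    eqToHom (show T.map f ≫ ℬ.a ≫ g = (T.map f ≫ ℬ.a) ≫ g by simp) ≫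
    (φ ▷ g) ≫ eqToHom (show (𝒜.a ≫ f) ≫ g = 𝒜.a ≫ f ≫ g by simp)

/-- The comparison 2-cell of the composite of two colax morphisms. -/
def compColax {𝒜 ℬ 𝒞 : PsAlg T} (r : 𝒜.A ⟶ ℬ.A) (s : ℬ.A ⟶ 𝒞.A)
    (ρ : 𝒜.a ≫ r ⟶ T.map r ≫ ℬ.a) (σ : ℬ.a ≫ s ⟶ T.map s ≫ 𝒞.a) :
    𝒜.a ≫ (r ≫ s) ⟶ T.map (r ≫ s) ≫ 𝒞.a :=
  eqToHom (show 𝒜.a ≫ r ≫ s = (𝒜.a ≫ r) ≫ s by simp) ≫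
    (ρ ▷ s) ≫
    eqToHom (show (T.map r ≫ ℬ.a) ≫ s = T.map r ≫ ℬ.a ≫ s by simp) ≫
    (T.map r ◁ σ) ≫
    eqToHom (show T.map r ≫ T.map s ≫ 𝒞.a = T.map (r ≫ s) ≫ 𝒞.a by
      rw [T.map_comp, Category.assoc])

/-- The identity lax (or colax) comparison on the identity morphism of a pseudo algebra. -/
def idLax (𝒜 : PsAlg T) : T.map (𝟙 𝒜.A) ≫ 𝒜.a ⟶ 𝒜.a ≫ 𝟙 𝒜.A :=
  eqToHom (by rw [T.map_id, Category.id_comp, Category.comp_id])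

/-- The identity colax comparison on the identity morphism of a pseudo algebra. -/
def idColax (𝒜 : PsAlg T) : 𝒜.a ≫ 𝟙 𝒜.A ⟶ T.map (𝟙 𝒜.A) ≫ 𝒜.a :=
  eqToHom (by rw [T.map_id, Category.id_comp, Category.comp_id])

/-- The coherence condition (coh) for a double cell `π : sf ⟶ gr` of pseudo algebras,
with lax morphisms `(f, φ), (g, γ)` and colax morphisms `(r, ρ), (s, σ)`:
`(s ◁ φ) ≫ (π ▷ a) ≫ (g ◁ ρ) = (σ ▷ Tf) ≫ (d ◁ Tπ) ≫ (γ ▷ Tr)`. -/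
def Coh (𝒜 ℬ 𝒞 𝒟 : PsAlg T) (f : 𝒜.A ⟶ ℬ.A) (g : 𝒞.A ⟶ 𝒟.A) (r : 𝒜.A ⟶ 𝒞.A)
    (s : ℬ.A ⟶ 𝒟.A)
    (φ : T.map f ≫ ℬ.a ⟶ 𝒜.a ≫ f) (γ : T.map g ≫ 𝒟.a ⟶ 𝒞.a ≫ g)
    (ρ : 𝒜.a ≫ r ⟶ T.map r ≫ 𝒞.a) (σ : ℬ.a ≫ s ⟶ T.map s ≫ 𝒟.a)
    (π : f ≫ s ⟶ r ≫ g) : Prop :=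
  eqToHom (show T.map f ≫ ℬ.a ≫ s = (T.map f ≫ ℬ.a) ≫ s by simp) ≫ (φ ▷ s) ≫
      eqToHom (show (𝒜.a ≫ f) ≫ s = 𝒜.a ≫ f ≫ s by simp) ≫ (𝒜.a ◁ π) ≫
      eqToHom (show 𝒜.a ≫ r ≫ g = (𝒜.a ≫ r) ≫ g by simp) ≫ (ρ ▷ g) ≫
      eqToHom (show (T.map r ≫ 𝒞.a) ≫ g = T.map r ≫ 𝒞.a ≫ g by simp) =
  (T.map f ◁ σ) ≫
      eqToHom (show T.map f ≫ T.map s ≫ 𝒟.a = T.map (f ≫ s) ≫ 𝒟.a by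
        rw [T.map_comp, Category.assoc]) ≫
      (T.map₂ π ▷ 𝒟.a) ≫
      eqToHom (show T.map (r ≫ g) ≫ 𝒟.a = T.map r ≫ T.map g ≫ 𝒟.a by
        rw [T.map_comp, Category.assoc]) ≫
      (T.map r ◁ γ)

/-- Horizontal pasting of quintet-type double cells. -/
def hCompCell {A B B' Cc D D' : C} {f : A ⟶ B} {f' : B ⟶ B'} {r : A ⟶ Cc} {s : B ⟶ D}
    {t : B' ⟶ D'} {g : Cc ⟶ D} {g' : D ⟶ D'}
    (π : f ≫ s ⟶ r ≫ g) (θ : f' ≫ t ⟶ s ≫ g') :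
    (f ≫ f') ≫ t ⟶ r ≫ (g ≫ g') :=
  eqToHom (by simp) ≫ f ◁ θ ≫ eqToHom (by simp) ≫ π ▷ g' ≫ eqToHom (by simp)

/-- Vertical pasting of quintet-type double cells. -/
def vCompCell {A B Cc D E F : C} {f : A ⟶ B} {s : B ⟶ D} {r : A ⟶ Cc} {g : Cc ⟶ D}
    {s' : D ⟶ F} {r' : Cc ⟶ E} {h : E ⟶ F}
    (π : f ≫ s ⟶ r ≫ g) (ζ : g ≫ s' ⟶ r' ≫ h) :
    f ≫ (s ≫ s') ⟶ (r ≫ r') ≫ h :=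
  eqToHom (by simp) ≫ π ▷ s' ≫ eqToHom (by simp) ≫ r ◁ ζ ≫ eqToHom (by simp)


section Aux

@[simp] lemma eqToHom_whiskerRight_eq {a b c : C} {f g : a ⟶ b} (e : f = g) (h : b ⟶ c) :
    eqToHom e ▷ h = eqToHom (by rw [e]) := by subst e; simp

@[simp] lemma whiskerLeft_eqToHom_eq {a b c : C} (f : a ⟶ b) {g h : b ⟶ c} (e : g = h) :
    f ◁ eqToHom e = eqToHom (by rw [e]) := by subst e; simp

lemma map₂_eqToHom' (T : TwoMonad C) {a b : C} {f g : a ⟶ b} (e : f = g) :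
    T.map₂ (eqToHom e) = eqToHom (by rw [e]) := by subst e; simp [T.map₂_id]

lemma map₂_comp' (T : TwoMonad C) {a b : C} {f g h : a ⟶ b} (η : f ⟶ g) (θ : g ⟶ h) :
    T.map₂ (η ≫ θ) = T.map₂ η ≫ T.map₂ θ := T.map₂_comp η θ

lemma map₂_whiskerLeft' (T : TwoMonad C) {a b c : C} (f : a ⟶ b) {g h : b ⟶ c} (η : g ⟶ h) :
    T.map₂ (f ◁ η) =
      eqToHom (T.map_comp f g) ≫ (T.map f ◁ T.map₂ η) ≫ eqToHom (T.map_comp f h).symm :=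
  T.map₂_whiskerLeft f η

lemma map₂_whiskerRight' (T : TwoMonad C) {a b c : C} {f g : a ⟶ b} (η : f ⟶ g) (h : b ⟶ c) :
    T.map₂ (η ▷ h) =
      eqToHom (T.map_comp f h) ≫ (T.map₂ η ▷ T.map h) ≫ eqToHom (T.map_comp g h).symm :=
  T.map₂_whiskerRight η h

lemma whiskerLeft_congr {a b c : C} {f g : a ⟶ b} (e : f = g) {h i : b ⟶ c} (η : h ⟶ i) :
    f ◁ η = eqToHom (by rw [e]) ≫ (g ◁ η) ≫ eqToHom (by rw [e]) := by subst e; simp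

end Aux

/-- In the double category `Psa₂(T)` of pseudo algebras, the vertical
composite of two coherent double cells is coherent: given coherent cells `π : sf ⟶ gr`
and `ζ : s'g ⟶ hr'` (with lax morphisms `f, g, h` and colax morphisms `r, s, r', s'`),
the pasted cell `(s' ◁ π) ≫ (ζ ▷ r) : s's f ⟶ h r'r` satisfies the coherence condition
with respect to `f, h` and the composite colax morphisms `r'r`, `s's`. -/
theorem vComp_coherent {𝒜 ℬ 𝒞 𝒟 ℰ ℱ : PsAlg T}
    {f : 𝒜.A ⟶ ℬ.A} {g : 𝒞.A ⟶ 𝒟.A} {h : ℰ.A ⟶ ℱ.A}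
    {r : 𝒜.A ⟶ 𝒞.A} {s : ℬ.A ⟶ 𝒟.A} {r' : 𝒞.A ⟶ ℰ.A} {s' : 𝒟.A ⟶ ℱ.A}
    {φ : T.map f ≫ ℬ.a ⟶ 𝒜.a ≫ f} {γ : T.map g ≫ 𝒟.a ⟶ 𝒞.a ≫ g}
    {δ : T.map h ≫ ℱ.a ⟶ ℰ.a ≫ h}
    {ρ : 𝒜.a ≫ r ⟶ T.map r ≫ 𝒞.a} {σ : ℬ.a ≫ s ⟶ T.map s ≫ 𝒟.a}
    {ρ' : 𝒞.a ≫ r' ⟶ T.map r' ≫ ℰ.a} {σ' : 𝒟.a ≫ s' ⟶ T.map s' ≫ ℱ.a}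
    (hf : IsLax T 𝒜 ℬ f φ) (hg : IsLax T 𝒞 𝒟 g γ) (hh : IsLax T ℰ ℱ h δ)
    (hr : IsColax T 𝒜 𝒞 r ρ) (hs : IsColax T ℬ 𝒟 s σ)
    (hr' : IsColax T 𝒞 ℰ r' ρ') (hs' : IsColax T 𝒟 ℱ s' σ')
    (π : f ≫ s ⟶ r ≫ g) (ζ : g ≫ s' ⟶ r' ≫ h)
    (hπ : Coh 𝒜 ℬ 𝒞 𝒟 f g r s φ γ ρ σ π)
    (hζ : Coh 𝒞 𝒟 ℰ ℱ g h r' s' γ δ ρ' σ' ζ) :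
    Coh 𝒜 ℬ ℰ ℱ f h (r ≫ r') (s ≫ s')
      φ δ (compColax r r' ρ ρ') (compColax s s' σ σ') (vCompCell π ζ) := by
  unfold Coh compColax vCompCell at *
  simp only [Strict.associator_eqToIso, eqToIso.hom, eqToIso.inv, Bicategory.comp_whiskerRight, Bicategory.whiskerLeft_comp, Bicategory.comp_whiskerLeft, Bicategory.whiskerRight_comp, Bicategory.whisker_assoc, eqToHom_whiskerRight_eq, whiskerLeft_eqToHom_eq, Category.assoc, eqToHom_trans, eqToHom_trans_assoc, eqToHom_refl, Category.comp_id, Category.id_comp, map₂_comp', map₂_whiskerLeft', map₂_whiskerRight', map₂_eqToHom', T.map_comp] at hπ hζ ⊢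
  rw [whiskerLeft_congr (T.map_comp r r') δ]
  simp only [Bicategory.comp_whiskerLeft, Strict.associator_eqToIso, eqToIso.hom, eqToIso.inv, whiskerLeft_eqToHom_eq, Category.assoc, eqToHom_trans, eqToHom_trans_assoc]
  -- step 1: exchange ρ / ζ
  have W1 := whisker_exchange ρ ζ
  simp only [Strict.associator_eqToIso, eqToIso.hom, eqToIso.inv, Bicategory.comp_whiskerRight, Bicategory.whiskerLeft_comp, Bicategory.comp_whiskerLeft, Bicategory.whiskerRight_comp, Bicategory.whisker_assoc, eqToHom_whiskerRight_eq, whiskerLeft_eqToHom_eq, Category.assoc, eqToHom_trans, eqToHom_trans_assoc, eqToHom_refl, Category.comp_id, Category.id_comp] at W1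
  -- whisker hπ with s'
  have H1 := congrArg (fun t => t ▷ s') hπ
  simp only [Strict.associator_eqToIso, eqToIso.hom, eqToIso.inv, Bicategory.comp_whiskerRight, Bicategory.whiskerLeft_comp, Bicategory.comp_whiskerLeft, Bicategory.whiskerRight_comp, Bicategory.whisker_assoc, eqToHom_whiskerRight_eq, whiskerLeft_eqToHom_eq, Category.assoc, eqToHom_trans, eqToHom_trans_assoc, eqToHom_refl, Category.comp_id, Category.id_comp] at H1
  -- whisker hζ with T.map r
  have H2 := congrArg (fun t => T.map r ◁ t) hζ
  simp only [Strict.associator_eqToIso, eqToIso.hom, eqToIso.inv, Bicategory.comp_whiskerRight, Bicategory.whiskerLeft_comp, Bicategory.comp_whiskerLeft, Bicategory.whiskerRight_comp, Bicategory.whisker_assoc, eqToHom_whiskerRight_eq, whiskerLeft_eqToHom_eq, Category.assoc, eqToHom_trans, eqToHom_trans_assoc, eqToHom_refl, Category.comp_id, Category.id_comp] at H2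
  -- exchange T.map₂ π / σ'
  have W2 := whisker_exchange (T.map₂ π) σ'
  rw [whiskerLeft_congr (T.map_comp f s) σ', whiskerLeft_congr (T.map_comp r g) σ'] at W2
  simp only [Strict.associator_eqToIso, eqToIso.hom, eqToIso.inv, Bicategory.comp_whiskerRight, Bicategory.whiskerLeft_comp, Bicategory.comp_whiskerLeft, Bicategory.whiskerRight_comp, Bicategory.whisker_assoc, eqToHom_whiskerRight_eq, whiskerLeft_eqToHom_eq, Category.assoc, eqToHom_trans, eqToHom_trans_assoc, eqToHom_refl, Category.comp_id, Category.id_comp] at W2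
  -- chunk rewrite lemmas
  have F1 : ∀ {z : T.obj 𝒜.A ⟶ ℱ.A} (X : ((T.map r ≫ 𝒞.a) ≫ r') ≫ h ⟶ z),
      𝒜.a ◁ r ◁ ζ ≫ eqToHom (show 𝒜.a ≫ r ≫ r' ≫ h = ((𝒜.a ≫ r) ≫ r') ≫ h by simp) ≫
        ρ ▷ r' ▷ h ≫ X =
      eqToHom (show 𝒜.a ≫ r ≫ g ≫ s' = ((𝒜.a ≫ r) ≫ g) ≫ s' by simp) ≫ ρ ▷ g ▷ s' ≫
        eqToHom (show ((T.map r ≫ 𝒞.a) ≫ g) ≫ s' = T.map r ≫ 𝒞.a ≫ g ≫ s' by simp) ≫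
        T.map r ◁ 𝒞.a ◁ ζ ≫
        eqToHom (show T.map r ≫ 𝒞.a ≫ r' ≫ h = ((T.map r ≫ 𝒞.a) ≫ r') ≫ h by simp) ≫ X := by
    intro z X
    have E1 := congrArg (fun t =>
      eqToHom (show 𝒜.a ≫ r ≫ g ≫ s' = (𝒜.a ≫ r) ≫ g ≫ s' by simp) ≫ t ≫
        eqToHom (show (T.map r ≫ 𝒞.a) ≫ r' ≫ h = ((T.map r ≫ 𝒞.a) ≫ r') ≫ h by simp) ≫ X) W1
    simp only [Category.assoc, eqToHom_trans, eqToHom_trans_assoc, eqToHom_refl,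
      Category.id_comp, Category.comp_id] at E1
    exact E1
  rw [F1]
  simp only [eqToHom_trans_assoc]
  have F2 : ∀ {z : T.obj 𝒜.A ⟶ ℱ.A} (X : T.map r ≫ 𝒞.a ≫ g ≫ s' ⟶ z),
      eqToHom (show T.map f ≫ ℬ.a ≫ s ≫ s' = ((T.map f ≫ ℬ.a) ≫ s) ≫ s' by simp) ≫
        φ ▷ s ▷ s' ≫
        eqToHom (show ((𝒜.a ≫ f) ≫ s) ≫ s' = 𝒜.a ≫ (f ≫ s) ≫ s' by simp) ≫
        𝒜.a ◁ π ▷ s' ≫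
        eqToHom (show 𝒜.a ≫ (r ≫ g) ≫ s' = ((𝒜.a ≫ r) ≫ g) ≫ s' by simp) ≫
        ρ ▷ g ▷ s' ≫
        eqToHom (show ((T.map r ≫ 𝒞.a) ≫ g) ≫ s' = T.map r ≫ 𝒞.a ≫ g ≫ s' by simp) ≫ X =
      eqToHom (show T.map f ≫ ℬ.a ≫ s ≫ s' = T.map f ≫ (ℬ.a ≫ s) ≫ s' by simp) ≫
        T.map f ◁ σ ▷ s' ≫
        eqToHom (show T.map f ≫ (T.map s ≫ 𝒟.a) ≫ s' = (T.map (f ≫ s) ≫ 𝒟.a) ≫ s' by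
          rw [T.map_comp]; simp) ≫
        T.map₂ π ▷ 𝒟.a ▷ s' ≫
        eqToHom (show (T.map (r ≫ g) ≫ 𝒟.a) ≫ s' = T.map r ≫ (T.map g ≫ 𝒟.a) ≫ s' by
          rw [T.map_comp]; simp) ≫
        T.map r ◁ γ ▷ s' ≫
        eqToHom (show T.map r ≫ (𝒞.a ≫ g) ≫ s' = T.map r ≫ 𝒞.a ≫ g ≫ s' by simp) ≫ X := by
    intro z X
    have E2 := congrArg (fun t =>
      eqToHom (show T.map f ≫ ℬ.a ≫ s ≫ s' = (T.map f ≫ ℬ.a ≫ s) ≫ s' by simp) ≫ t ≫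
        eqToHom (show (T.map r ≫ 𝒞.a ≫ g) ≫ s' = T.map r ≫ 𝒞.a ≫ g ≫ s' by simp) ≫ X) H1
    simp only [Category.assoc, eqToHom_trans, eqToHom_trans_assoc, eqToHom_refl,
      Category.id_comp, Category.comp_id] at E2
    exact E2
  rw [F2]
  have F3 :
      T.map r ◁ γ ▷ s' ≫
        eqToHom (show T.map r ≫ (𝒞.a ≫ g) ≫ s' = T.map r ≫ 𝒞.a ≫ g ≫ s' by simp) ≫
        T.map r ◁ 𝒞.a ◁ ζ ≫
        eqToHom (show T.map r ≫ 𝒞.a ≫ r' ≫ h = T.map r ≫ (𝒞.a ≫ r') ≫ h by simp) ≫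
        T.map r ◁ ρ' ▷ h ≫
        eqToHom (show T.map r ≫ (T.map r' ≫ ℰ.a) ≫ h = T.map (r ≫ r') ≫ ℰ.a ≫ h by
          rw [T.map_comp]; simp) =
      eqToHom (show T.map r ≫ (T.map g ≫ 𝒟.a) ≫ s' = T.map r ≫ T.map g ≫ 𝒟.a ≫ s' by simp) ≫
        T.map r ◁ T.map g ◁ σ' ≫
        eqToHom (show T.map r ≫ T.map g ≫ T.map s' ≫ ℱ.a = T.map r ≫ T.map (g ≫ s') ≫ ℱ.a by
          rw [T.map_comp]; simp) ≫
        T.map r ◁ T.map₂ ζ ▷ ℱ.a ≫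
        eqToHom (show T.map r ≫ T.map (r' ≫ h) ≫ ℱ.a = T.map r ≫ T.map r' ≫ T.map h ≫ ℱ.a by
          rw [T.map_comp]; simp) ≫
        T.map r ◁ T.map r' ◁ δ ≫
        eqToHom (show T.map r ≫ T.map r' ≫ ℰ.a ≫ h = T.map (r ≫ r') ≫ ℰ.a ≫ h by
          rw [T.map_comp]; simp) := by
    have E3 := congrArg (fun t =>
      eqToHom (show T.map r ≫ T.map g ≫ 𝒟.a ≫ s' = T.map r ≫ (T.map g ≫ 𝒟.a) ≫ s' by
        simp).symm ≫ t ≫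
        eqToHom (show T.map r ≫ T.map r' ≫ ℰ.a ≫ h = T.map (r ≫ r') ≫ ℰ.a ≫ h by
          rw [T.map_comp]; simp)) H2
    simp only [Category.assoc, eqToHom_trans, eqToHom_trans_assoc, eqToHom_refl,
      Category.id_comp, Category.comp_id] at E3
    exact E3
  rw [F3]
  simp only [eqToHom_trans_assoc]
  have F4 : ∀ {z : T.obj 𝒜.A ⟶ ℱ.A} (X : T.map r ≫ T.map g ≫ T.map s' ≫ ℱ.a ⟶ z),
      T.map₂ π ▷ 𝒟.a ▷ s' ≫
        eqToHom (show (T.map (r ≫ g) ≫ 𝒟.a) ≫ s' = T.map r ≫ T.map g ≫ 𝒟.a ≫ s' by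
          rw [T.map_comp]; simp) ≫
        T.map r ◁ T.map g ◁ σ' ≫ X =
      eqToHom (show (T.map (f ≫ s) ≫ 𝒟.a) ≫ s' = T.map f ≫ T.map s ≫ 𝒟.a ≫ s' by
          rw [T.map_comp]; simp) ≫
        T.map f ◁ T.map s ◁ σ' ≫
        eqToHom (show T.map f ≫ T.map s ≫ T.map s' ≫ ℱ.a = (T.map (f ≫ s) ≫ T.map s') ≫ ℱ.a by
          rw [T.map_comp]; simp) ≫
        T.map₂ π ▷ T.map s' ▷ ℱ.a ≫
        eqToHom (show (T.map (r ≫ g) ≫ T.map s') ≫ ℱ.a = T.map r ≫ T.map g ≫ T.map s' ≫ ℱ.a by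
          rw [T.map_comp]; simp) ≫ X := by
    intro z X
    have E4 := congrArg (fun t =>
      eqToHom (show (T.map (f ≫ s) ≫ 𝒟.a) ≫ s' = T.map (f ≫ s) ≫ 𝒟.a ≫ s' by simp) ≫ t ≫
        eqToHom (show T.map (r ≫ g) ≫ T.map s' ≫ ℱ.a = T.map r ≫ T.map g ≫ T.map s' ≫ ℱ.a by
          rw [T.map_comp]; simp) ≫ X) W2.symm
    simp only [Category.assoc, eqToHom_trans, eqToHom_trans_assoc, eqToHom_refl,
      Category.id_comp, Category.comp_id] at E4
    exact E4
  rw [F4]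
  simp only [eqToHom_trans_assoc]
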